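/- Classification-preserving reduction for step functions: with the notation above, any minimizer f̃ of the hinge risk R_{φ_h} over 𝓕̃_{𝒢,J} has prediction set G_{f̃} = {x : f̃(x) ≥ 0} that minimizes the classification risk 𝓡 over 𝒢, i.e., R(f̃) = inf_{G ∈ 𝒢} 𝓡(G). -/

import Mathlib

open MeasureTheory Set Finset

/-!
On `[-1, 1]` the hinge loss is affine, `φ_h(f) = 1 + (1 - 2η) f`, and a nested step classifier
`f̃ = Σ c_j (2·1_{G_j} - 1)` takes values there. Hence `R_{φ_h}(f̃) = Σ c_j R_{φ_h}(2·1_{G_j} - 1)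
= Σ c_j 2𝓡(G_j)`. Each pure classifier `2·1_G - 1` with `G ∈ 𝒢` lies in the class, so minimality
of `f̃` gives `R_{φ_h}(f̃) ≤ 2𝓡(G)`; an average that is at most each of its terms equals every
term of positive weight. Finally, by nestedness the prediction set `{Σ c_j 1_{G_j} ≥ 1/2}` is a
single `G_m` of positive weight.
-/

section NestedSteps

variable {X : Type*}

theorem indicator_one_mem_Icc (S : Set X) (x : X) :
    S.indicator (fun _ => (1:ℝ)) x ∈ Icc (0:ℝ) 1 := by
  by_cases hx : x ∈ S <;> simp [hx]

theorem sum_mul_indicator_mem_Icc {ι : Type*} [Fintype ι] {c : ι → ℝ} (hc : ∀ j, 0 ≤ c j)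
    (hc1 : ∑ j, c j = 1) (G : ι → Set X) (x : X) :
    ∑ j, c j * (G j).indicator (fun _ => (1:ℝ)) x ∈ Icc (0:ℝ) 1 := by
  have hind j := indicator_one_mem_Icc (G j) x
  refine ⟨sum_nonneg fun j _ => mul_nonneg (hc j) (hind j).1, ?_⟩
  exact (sum_le_sum fun j _ => mul_le_of_le_one_right (hc j) (hind j).2).trans_eq hc1

theorem exists_setOf_le_sum_mul_indicator_eq :
    ∀ {J : ℕ} (c : Fin J → ℝ) (G : Fin J → Set X), (∀ j, 0 ≤ c j) → Antitone G →
      ∀ {t : ℝ}, 0 < t → t ≤ ∑ j, c j →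
        ∃ m, 0 < c m ∧ {x | t ≤ ∑ j, c j * (G j).indicator (fun _ => (1:ℝ)) x} = G m
  | 0, _, _, _, _, _, ht0, ht => by simp only [univ_eq_empty, sum_empty] at ht; linarith
  | J + 1, c, G, hc, hG, t, ht0, ht => by
    have houtside : ∀ x ∉ G 0, ∀ j, x ∉ G j := fun x hx j h => hx (hG (Fin.zero_le j) h)
    by_cases hc0 : t ≤ c 0
    · refine ⟨0, ht0.trans_le hc0, Set.ext fun x => ⟨fun hx => ?_, fun hx => ?_⟩⟩
      · by_contra hx0
        have : t ≤ 0 := by simpa [houtside x hx0] using hx.out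
        linarith
      · calc t ≤ c 0 * (G 0).indicator (fun _ => (1:ℝ)) x := by simpa [hx]
          _ ≤ _ := single_le_sum (fun j _ => mul_nonneg (hc j) (indicator_one_mem_Icc _ x).1)
              (mem_univ 0)
    · rw [Fin.sum_univ_succ] at ht
      obtain ⟨m, hm, hset⟩ := exists_setOf_le_sum_mul_indicator_eq (c ∘ Fin.succ) (G ∘ Fin.succ)
        (fun j => hc _) (hG.comp_monotone (Fin.strictMono_succ.monotone)) (t := t - c 0)
        (by linarith) (by simp only [Function.comp_apply]; linarith)
      refine ⟨m.succ, hm, Set.ext fun x => ?_⟩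
      by_cases hx : x ∈ G 0
      · have := Set.ext_iff.1 hset x
        simp only [mem_ofPred_eq, Function.comp_apply] at this
        simp only [mem_ofPred_eq, Fin.sum_univ_succ, hx, indicator_of_mem, mul_one]
        rw [← this]
        constructor <;> intro h <;> linarith
      · simp only [mem_ofPred_eq, houtside x hx, not_false_eq_true, indicator_of_notMem,
          mul_zero, sum_const_zero, iff_false, not_le]
        linarith

theorem eq_of_forall_le_of_sum_mul_eq {ι : Type*} [Fintype ι] {c b : ι → ℝ} {a : ℝ}
    (hc : ∀ j, 0 ≤ c j) (hc1 : ∑ j, c j = 1) (hle : ∀ j, a ≤ b j)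
    (havg : ∑ j, c j * b j = a) {m : ι} (hm : 0 < c m) : b m = a := by
  have hzero : ∑ j, c j * (b j - a) = 0 := by
    simp only [mul_sub, sum_sub_distrib, ← sum_mul, hc1, havg, one_mul, sub_self]
  have := (sum_eq_zero_iff_of_nonneg fun j _ => mul_nonneg (hc j) (sub_nonneg.2 (hle j))).1
    hzero m (mem_univ m)
  linarith [(mul_eq_zero.1 this).resolve_left hm.ne']

theorem hinge_two_mul_sub_one {a h : ℝ} (hh : h ∈ Icc (0:ℝ) 1) :
    a * max 0 (1 - (2 * h - 1)) + (1 - a) * max 0 (1 + (2 * h - 1)) =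
      2 * (a + (1 - 2 * a) * h) := by
  rw [max_eq_right (by linarith [hh.2]), max_eq_right (by linarith [hh.1])]
  ring

theorem mul_indicator_compl_add_mul_indicator (a : ℝ) (S : Set X) (x : X) :
    a * Sᶜ.indicator (fun _ => (1:ℝ)) x + (1 - a) * S.indicator (fun _ => (1:ℝ)) x =
      a + (1 - 2 * a) * S.indicator (fun _ => (1:ℝ)) x := by
  by_cases hx : x ∈ S <;> simp [hx]; ring

end NestedSteps

section Risks

variable {X : Type*} [MeasurableSpace X] (μ : Measure X) {η : X → ℝ}

theorem integral_hinge_two_mul_sub_one {h : X → ℝ} (hh : ∀ x, h x ∈ Icc (0:ℝ) 1) :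
    ∫ x, (η x * max 0 (1 - (2 * h x - 1)) + (1 - η x) * max 0 (1 + (2 * h x - 1))) ∂μ =
      2 * ∫ x, (η x + (1 - 2 * η x) * h x) ∂μ := by
  simp_rw [hinge_two_mul_sub_one (hh _), integral_const_mul]

theorem integrable_add_mul_indicator [IsFiniteMeasure μ] (hη : Measurable η)
    (hη01 : ∀ x, η x ∈ Icc (0:ℝ) 1) {S : Set X} (hS : MeasurableSet S) :
    Integrable (fun x => η x + (1 - 2 * η x) * S.indicator (fun _ => (1:ℝ)) x) μ := by
  refine .of_bound (by fun_prop (disch := exact hS)) 1 (ae_of_all _ fun x => ?_)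
  rw [← mul_indicator_compl_add_mul_indicator, Real.norm_eq_abs, abs_le]
  obtain ⟨h0, h1⟩ := hη01 x
  by_cases hx : x ∈ S <;> simp [hx] <;> constructor <;> linarith

theorem integral_add_mul_sum_mul_indicator [IsFiniteMeasure μ] (hη : Measurable η)
    (hη01 : ∀ x, η x ∈ Icc (0:ℝ) 1) {ι : Type*} [Fintype ι] {c : ι → ℝ} (hc1 : ∑ j, c j = 1)
    {G : ι → Set X} (hG : ∀ j, MeasurableSet (G j)) :
    ∫ x, (η x + (1 - 2 * η x) * ∑ j, c j * (G j).indicator (fun _ => (1:ℝ)) x) ∂μ =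
      ∑ j, c j * ∫ x, (η x + (1 - 2 * η x) * (G j).indicator (fun _ => (1:ℝ)) x) ∂μ := by
  have hpt : ∀ x, η x + (1 - 2 * η x) * ∑ j, c j * (G j).indicator (fun _ => (1:ℝ)) x =
      ∑ j, c j * (η x + (1 - 2 * η x) * (G j).indicator (fun _ => (1:ℝ)) x) := fun x => by
    simp only [mul_add, sum_add_distrib, ← sum_mul, hc1, one_mul, mul_sum]
    ring_nf
  simp_rw [hpt]
  rw [integral_finsetSum _ fun j _ => (integrable_add_mul_indicator μ hη hη01 (hG j)).const_mul _]
  simp_rw [integral_const_mul]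

end Risks

theorem step_hinge_minimizer_is_risk_minimizer_general {X : Type*} [MeasurableSpace X]
    (μ : Measure X) [IsProbabilityMeasure μ]
    (η : X → ℝ) (hη : Measurable η) (hη01 : ∀ x, η x ∈ Icc (0:ℝ) 1)
    (𝒢 : Set (Set X)) (h𝒢 : ∀ G ∈ 𝒢, MeasurableSet G)
    (J : ℕ)
    (RG : Set X → ℝ)
    (hRG : ∀ S : Set X, RG S = ∫ x, (η x * Sᶜ.indicator (fun _ => (1:ℝ)) x
        + (1 - η x) * S.indicator (fun _ => (1:ℝ)) x) ∂μ)
    (Rh : (X → ℝ) → ℝ)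
    (hRh : ∀ f, Rh f = ∫ x, (η x * max 0 (1 - f x)
        + (1 - η x) * max 0 (1 + f x)) ∂μ)
    (F : Set (X → ℝ))
    (hF : F = {f | ∃ (G : Fin J → Set X) (cw : Fin J → ℝ),
        (∀ j, G j ∈ 𝒢) ∧ (∀ i j : Fin J, i ≤ j → G j ⊆ G i) ∧
        (∀ j, 0 ≤ cw j) ∧ (∑ j, cw j = 1) ∧
        ∀ x, f x = 2 * (∑ j, cw j * (G j).indicator (fun _ => (1:ℝ)) x) - 1})
    (ftil : X → ℝ) (hftil : ftil ∈ F) (hmin : ∀ f ∈ F, Rh ftil ≤ Rh f) :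
    (∀ G ∈ 𝒢, RG {x | 0 ≤ ftil x} ≤ RG G) ∧
    RG {x | 0 ≤ ftil x} = sInf (RG '' 𝒢) := by
  rw [hF] at hftil
  obtain ⟨G, c, hG𝒢, hG, hc0, hc1, hftil_eq⟩ := hftil
  simp_rw [mul_indicator_compl_add_mul_indicator] at hRG
  have hRh_step : ∀ h : X → ℝ, (∀ x, h x ∈ Icc (0:ℝ) 1) →
      Rh (fun x => 2 * h x - 1) = 2 * ∫ x, (η x + (1 - 2 * η x) * h x) ∂μ :=
    fun h hh => by rw [hRh, integral_hinge_two_mul_sub_one μ hh]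
  have hpure : ∀ S ∈ 𝒢, Rh ftil ≤ 2 * RG S := fun S hS => by
    have hS : (fun x => 2 * S.indicator (fun _ => (1:ℝ)) x - 1) ∈ F := by
      rw [hF]
      exact ⟨fun _ => S, c, fun _ => hS, fun _ _ _ => subset_rfl, hc0, hc1,
        fun x => by rw [← sum_mul, hc1, one_mul]⟩
    simpa [hRh_step _ (indicator_one_mem_Icc S), hRG] using hmin _ hS
  have havg : ∑ j, c j * (2 * RG (G j)) = Rh ftil := by
    rw [funext hftil_eq, hRh_step _ (sum_mul_indicator_mem_Icc hc0 hc1 G),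
      integral_add_mul_sum_mul_indicator μ hη hη01 hc1 fun j => h𝒢 _ (hG𝒢 j), mul_sum]
    simp_rw [hRG, mul_left_comm]
  obtain ⟨m, hcm, hm⟩ := exists_setOf_le_sum_mul_indicator_eq c G hc0 hG (t := 1 / 2)
    (by norm_num) (by rw [hc1]; norm_num)
  have hset : {x | 0 ≤ ftil x} = G m := by
    rw [← hm]
    ext x
    simp only [mem_ofPred_eq, hftil_eq]
    constructor <;> intro <;> linarith
  have hGm : 2 * RG (G m) = Rh ftil :=
    eq_of_forall_le_of_sum_mul_eq hc0 hc1 (fun j => hpure _ (hG𝒢 j)) havg hcm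
  have hleast : IsLeast (RG '' 𝒢) (RG (G m)) :=
    ⟨mem_image_of_mem _ (hG𝒢 m), forall_mem_image.2 fun S hS => by linarith [hpure S hS]⟩
  rw [hset]
  exact ⟨fun S hS => hleast.2 (mem_image_of_mem _ hS), hleast.csInf_eq.symm⟩

/-- Classification-preserving reduction for step functions: any minimizer `f̃` of the
hinge risk over the class `𝓕̃_{𝒢,J}` of nested step classifiers has prediction set
`G_{f̃} = {x : f̃ x ≥ 0}` that minimizes the classification risk `𝓡` over `𝒢`,
i.e. `𝓡(G_{f̃}) = inf_{G ∈ 𝒢} 𝓡(G)`. -/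
theorem step_hinge_minimizer_is_risk_minimizer {X : Type*} [MeasurableSpace X]
    (μ : Measure X) [IsProbabilityMeasure μ]
    (η : X → ℝ) (hη : Measurable η) (hη01 : ∀ x, η x ∈ Icc (0:ℝ) 1)
    (𝒢 : Set (Set X)) (h𝒢 : ∀ G ∈ 𝒢, MeasurableSet G)
    (J : ℕ) (hJ : 1 ≤ J)
    (RG : Set X → ℝ)
    (hRG : ∀ S : Set X, RG S = ∫ x, (η x * Sᶜ.indicator (fun _ => (1:ℝ)) x
        + (1 - η x) * S.indicator (fun _ => (1:ℝ)) x) ∂μ)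
    (Rh : (X → ℝ) → ℝ)
    (hRh : ∀ f, Rh f = ∫ x, (η x * max 0 (1 - f x)
        + (1 - η x) * max 0 (1 + f x)) ∂μ)
    (F : Set (X → ℝ))
    (hF : F = {f | ∃ (G : Fin J → Set X) (cw : Fin J → ℝ),
        (∀ j, G j ∈ 𝒢) ∧ (∀ i j : Fin J, i ≤ j → G j ⊆ G i) ∧
        (∀ j, 0 ≤ cw j) ∧ (∑ j, cw j = 1) ∧
        ∀ x, f x = 2 * (∑ j, cw j * (G j).indicator (fun _ => (1:ℝ)) x) - 1})
    (ftil : X → ℝ) (hftil : ftil ∈ F) (hmin : ∀ f ∈ F, Rh ftil ≤ Rh f) :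
    (∀ G ∈ 𝒢, RG {x | 0 ≤ ftil x} ≤ RG G) ∧
    RG {x | 0 ≤ ftil x} = sInf (RG '' 𝒢) :=
  step_hinge_minimizer_is_risk_minimizer_general μ η hη hη01 𝒢 h𝒢 J RG hRG Rh hRh F hF ftil hftil
    hmin
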